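/- arXiv:0803.0148 — 6 statements merged into one kernel-verified Lean document; each statement's English description precedes it below -/
import Mathlib

section
/- Let A be a commutative semiring equipped with a linear order compatible with its operations (x ≤ z and y ≤ t imply x + y ≤ z + t and x·y ≤ z·t), such that 0 ≠ 1 and a + b = max(a, b) for all a, b ∈ A (a tropical halo). Then A has tempered growth: for every nonzero polynomial P with natural number coefficients and every x ∈ A, if x^n ≤ P(n) in A for all n ∈ ℕ (where the natural number P(n) is sent into A by the canonical map ℕ → A), then x ≤ 1. -/
/-! In a tropical halo `1 + 1 = max 1 1 = 1`, so every nonzero natural number is `1` in `A`.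
Since `P ≠ 0` has `P(1) ≠ 0`, the hypothesis at `n = 1` already reads `x ≤ 1`. -/

theorem natCast_eq_one_of_one_add_one_eq_one {A : Type*} [Semiring A] (h : (1 : A) + 1 = 1) :
    ∀ {n : ℕ}, n ≠ 0 → (n : A) = 1
  | 1, _ => Nat.cast_one
  | n + 2, _ => by
    rw [Nat.cast_succ, natCast_eq_one_of_one_add_one_eq_one h n.succ_ne_zero, h]

theorem Polynomial.eval_one_pos {P : Polynomial ℕ} (hP : P ≠ 0) : 0 < P.eval 1 := by
  rw [eval_eq_sum, sum_def]
  refine Finset.sum_pos (fun i hi => ?_) (support_nonempty.mpr hP)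
  simpa [Nat.pos_iff_ne_zero] using mem_support_iff.mp hi

theorem tropical_halo_tempered_growth_general {A : Type*} [CommSemiring A] [LinearOrder A]
    (htrop : ∀ a b : A, a + b = max a b) :
    ∀ P : Polynomial ℕ, P ≠ 0 →
      ∀ x : A, (∀ n : ℕ, x ^ n ≤ ((P.eval n : ℕ) : A)) → x ≤ 1 := by
  intro P hP x hx
  have hcast : ((P.eval 1 : ℕ) : A) = 1 :=
    natCast_eq_one_of_one_add_one_eq_one (by rw [htrop, max_self]) (Polynomial.eval_one_pos hP).ne'
  simpa only [pow_one, hcast] using hx 1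

/-- A tropical halo has tempered growth: if a commutative semiring `A` carries a
compatible linear order with `0 ≠ 1` and `a + b = max a b`, then for every nonzero
polynomial `P` with natural coefficients and every `x : A`, `x ^ n ≤ P(n)` for all
`n : ℕ` implies `x ≤ 1`. -/
theorem tropical_halo_tempered_growth {A : Type*} [CommSemiring A] [LinearOrder A]
    (hadd : ∀ x y z t : A, x ≤ z → y ≤ t → x + y ≤ z + t)
    (hmul : ∀ x y z t : A, x ≤ z → y ≤ t → x * y ≤ z * t)
    (hne : (0 : A) ≠ 1)
    (htrop : ∀ a b : A, a + b = max a b) :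
    ∀ P : Polynomial ℕ, P ≠ 0 →
      ∀ x : A, (∀ n : ℕ, x ^ n ≤ ((P.eval n : ℕ) : A)) → x ≤ 1 :=
  tropical_halo_tempered_growth_general htrop
end

section
/- Let R be a commutative semifield equipped with a linear order compatible with its operations (x ≤ z and y ≤ t imply x + y ≤ z + t and x·y ≤ z·t) and with 0 < 1. Assume: (i) the canonical map ℕ → R is injective; (ii) whenever y < x in R there exists t ∈ R with t > 0 and x = y + t; (iii) R is archimedean: for all x, y ∈ R with x > y > 0 there exists n ∈ ℕ with n·y > x (n-fold sum). Then R has tempered growth: for every nonzero polynomial P with natural number coefficients and every x ∈ R, if x^n ≤ P(n) in R for all n ∈ ℕ (where the natural number P(n) is sent into R by the canonical map ℕ → R), then x ≤ 1. -/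
/-!
Write `x = 1 + t` with `t > 0` and put `k = deg P + 1`. The binomial theorem gives
`C(n, k) tᵏ ≤ (1 + t)ⁿ ≤ P(n)`, while `C(n, k)` has degree `k > deg P` in `n`, so for every
`m` some `n` has `m P(n) ≤ C(n, k)` with `P(n) ≠ 0`. Cancelling `P(n)` yields `m tᵏ ≤ 1` for
every `m`, which the archimedean property forbids.
-/

open Polynomial Filter Asymptotics

theorem isOrderedRing_of_add_le_add_of_mul_le_mul {R : Type*} [Semiring R] [PartialOrder R]
    (hadd : ∀ x y z t : R, x ≤ z → y ≤ t → x + y ≤ z + t)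
    (hmul : ∀ x y z t : R, x ≤ z → y ≤ t → x * y ≤ z * t) (h01 : (0 : R) ≤ 1) :
    IsOrderedRing R where
  add_le_add_left _ _ h _ := hadd _ _ _ _ h le_rfl
  zero_le_one := h01
  mul_le_mul_of_nonneg_left _ _ _ _ h := hmul _ _ _ _ le_rfl h
  mul_le_mul_of_nonneg_right _ _ _ _ h := hmul _ _ _ _ h le_rfl

theorem archimedean_of_exists_lt_nsmul {R : Type*} [AddCommMonoid R] [LinearOrder R]
    (harch : ∀ x y : R, 0 < y → y < x → ∃ n : ℕ, x < n • y) : Archimedean R where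
  arch x y hy := (le_or_gt x y).elim (fun h => ⟨1, by rwa [one_nsmul]⟩)
    fun h => (harch x y hy h).imp fun _ => le_of_lt

theorem choose_mul_pow_le_one_add_pow {R : Type*} [CommSemiring R] [PartialOrder R]
    [IsOrderedRing R] {t : R} (ht : 0 ≤ t) (n k : ℕ) :
    (n.choose k : R) * t ^ k ≤ (1 + t) ^ n := by
  rcases le_or_gt k n with hkn | hnk
  · rw [add_comm, add_pow]
    have hterm := Finset.single_le_sum (f := fun i => t ^ i * 1 ^ (n - i) * (n.choose i : R))
      (fun i _ => by
        simp only [one_pow, mul_one]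
        exact mul_nonneg (pow_nonneg ht i) (Nat.cast_nonneg _))
      (Finset.mem_range_succ_iff.mpr hkn)
    simpa [mul_comm] using hterm
  · rw [Nat.choose_eq_zero_of_lt hnk, Nat.cast_zero, zero_mul]
    exact pow_nonneg (add_nonneg zero_le_one ht) n

namespace Polynomial

theorem isLittleO_eval_choose_natDegree_succ (P : ℕ[X]) :
    (fun n : ℕ => ((P.eval n : ℕ) : ℝ)) =o[atTop]
      fun n => (n.choose (P.natDegree + 1) : ℝ) := by
  have hdeg : (P.map (Nat.castRingHom ℝ)).degree < (X ^ (P.natDegree + 1) : ℝ[X]).degree := by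
    rw [degree_X_pow]
    exact degree_map_le.trans_lt <| degree_le_natDegree.trans_lt <| by
      exact_mod_cast Nat.lt_succ_self _
  have hpow := (isLittleO_atTop_of_degree_lt _ _ hdeg).comp_tendsto tendsto_natCast_atTop_atTop
  simp only [Function.comp_def, eval_natCast_map, eval_pow, eval_X, eq_natCast] at hpow
  exact hpow.trans_isTheta (isTheta_choose _).symm

theorem eventually_mul_eval_le_choose_natDegree_succ (P : ℕ[X]) (c : ℕ) :
    ∀ᶠ n in atTop, c * P.eval n ≤ n.choose (P.natDegree + 1) := by
  filter_upwards [P.isLittleO_eval_choose_natDegree_succ.bound (c := 1 / (c + 1)) (by positivity)]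
    with n hn
  rw [Real.norm_natCast, Real.norm_natCast, div_mul_eq_mul_div, one_mul,
    le_div_iff₀ (by positivity)] at hn
  calc c * P.eval n ≤ P.eval n * (c + 1) := by
        rw [mul_comm]; exact Nat.mul_le_mul_left _ c.le_succ
    _ ≤ n.choose (P.natDegree + 1) := by exact_mod_cast hn

theorem eventually_eval_natCast_ne_zero {P : ℕ[X]} (hP : P ≠ 0) :
    ∀ᶠ n : ℕ in atTop, P.eval n ≠ 0 := by
  have hQ : P.map (Nat.castRingHom ℝ) ≠ 0 :=
    (Polynomial.map_ne_zero_iff Nat.cast_injective).mpr hP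
  filter_upwards [tendsto_natCast_atTop_atTop.eventually (eventually_atTop_not_isRoot _ hQ)]
    with n hn
  simpa [IsRoot, eval_natCast_map] using hn

end Polynomial

/-- An archimedean positive totally ordered aura in which `ℕ` injects and in which
`y < x` implies `x = y + t` for some `t > 0` has tempered growth. -/
theorem archimedean_aura_tempered_growth {R : Type*} [Semifield R] [LinearOrder R]
    (hadd : ∀ x y z t : R, x ≤ z → y ≤ t → x + y ≤ z + t)
    (hmul : ∀ x y z t : R, x ≤ z → y ≤ t → x * y ≤ z * t)
    (hpos : (0 : R) < 1)
    (hinj : Function.Injective (Nat.cast : ℕ → R))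
    (hsub : ∀ x y : R, y < x → ∃ t : R, 0 < t ∧ x = y + t)
    (harch : ∀ x y : R, 0 < y → y < x → ∃ n : ℕ, x < n • y) :
    ∀ P : Polynomial ℕ, P ≠ 0 →
      ∀ x : R, (∀ n : ℕ, x ^ n ≤ ((P.eval n : ℕ) : R)) → x ≤ 1 := by
  have := isOrderedRing_of_add_le_add_of_mul_le_mul hadd hmul hpos.le
  have : CharZero R := ⟨hinj⟩
  have := archimedean_of_exists_lt_nsmul harch
  have : PosMulStrictMono R := PosMulMono.toPosMulStrictMono
  have : MulPosStrictMono R := MulPosMono.toMulPosStrictMono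
  intro P hP x hx
  by_contra! hx1
  obtain ⟨t, ht, rfl⟩ := hsub x 1 hx1
  set k := P.natDegree + 1
  obtain ⟨m, hm⟩ := Archimedean.arch (2 : R) (pow_pos ht k)
  obtain ⟨n, hmn, hn⟩ := ((P.eventually_mul_eval_le_choose_natDegree_succ m).and
    (eventually_eval_natCast_ne_zero hP)).exists
  have hPn : (0 : R) < P.eval n := Nat.cast_pos.mpr (Nat.pos_of_ne_zero hn)
  have hmu : 1 < (m : R) * t ^ k := by
    rw [← nsmul_eq_mul]
    exact (by exact_mod_cast Nat.one_lt_two : (1 : R) < 2).trans_le hm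
  refine lt_irrefl ((P.eval n : ℕ) : R) ?_
  calc ((P.eval n : ℕ) : R) = 1 * P.eval n := (one_mul _).symm
    _ < (m : R) * t ^ k * P.eval n := mul_lt_mul_of_pos_right hmu hPn
    _ = ((m * P.eval n : ℕ) : R) * t ^ k := by push_cast; ring
    _ ≤ (n.choose k : R) * t ^ k := by gcongr
    _ ≤ (1 + t) ^ n := choose_mul_pow_le_one_add_pow ht.le n k
    _ ≤ P.eval n := hx n
end

section
/- Let A be a commutative ring, R a positive totally ordered aura, and |·| : A → R a pre-archimedean seminorm, i.e., |a + b| ≤ max(|2|, 1)·max(|a|, |b|) for all a, b ∈ A, where 2 denotes the image of 2 ∈ ℤ in A. Then the following are equivalent: (1) |·| is non-archimedean, i.e., |a + b| ≤ max(|a|, |b|) for all a, b ∈ A; (2) |n| ≤ 1 for every n ∈ ℕ (image of n in A); (3) |2| ≤ 1. -/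
/-!
Every natural number is a sum of ones, so an ultrametric `f` is at most `max (f 0) (f 1) ≤ 1` on
`ℕ`; in particular `|2| ≤ 1`. Conversely, once `|2| ≤ 1` the pre-archimedean constant
`max |2| 1` equals `1`, and the pre-archimedean inequality is the ultrametric one.
-/

theorem apply_natCast_le_max_zero_one {A R : Type*} [AddMonoidWithOne A] [LinearOrder R]
    {f : A → R} (hf : ∀ a b : A, f (a + b) ≤ max (f a) (f b)) (n : ℕ) :
    f n ≤ max (f 0) (f 1) := by
  induction n with
  | zero => simpa only [Nat.cast_zero] using le_max_left _ _
  | succ n ih =>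
    rw [Nat.cast_succ]
    exact (hf _ _).trans (max_le ih (le_max_right _ _))

theorem prearchimedean_nonarchimedean_iff_general {A : Type*} [CommRing A]
    {R : Type*} [Semifield R] [LinearOrder R]
    (hpos : (0 : R) < 1)
    (f : A → R)
    (hf0 : f 0 = 0) (hf1 : f 1 = 1)
    (hpa : ∀ a b : A, f (a + b) ≤ max (f ((2 : ℤ) : A)) 1 * max (f a) (f b)) :
    ((∀ a b : A, f (a + b) ≤ max (f a) (f b)) ↔ (∀ n : ℕ, f ((n : ℕ) : A) ≤ 1)) ∧
      ((∀ n : ℕ, f ((n : ℕ) : A) ≤ 1) ↔ f ((2 : ℤ) : A) ≤ 1) := by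
  have natCast_of_nonarch (h : ∀ a b : A, f (a + b) ≤ max (f a) (f b)) (n : ℕ) :
      f (n : A) ≤ 1 :=
    (apply_natCast_le_max_zero_one h n).trans (max_le (hf0 ▸ hpos.le) hf1.le)
  have two_of_natCast (h : ∀ n : ℕ, f (n : A) ≤ 1) : f ((2 : ℤ) : A) ≤ 1 := by
    simpa only [Int.cast_ofNat, Nat.cast_ofNat] using h 2
  have nonarch_of_two (h2 : f ((2 : ℤ) : A) ≤ 1) (a b : A) : f (a + b) ≤ max (f a) (f b) := by
    simpa only [max_eq_right h2, one_mul] using hpa a b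
  exact ⟨⟨natCast_of_nonarch, nonarch_of_two ∘ two_of_natCast⟩,
    ⟨two_of_natCast, natCast_of_nonarch ∘ nonarch_of_two⟩⟩

/-- For a pre-archimedean seminorm `|·| : A → R`, the following are equivalent:
(1) `|·|` is non-archimedean; (2) `|n| ≤ 1` for all `n : ℕ`; (3) `|2| ≤ 1`. -/
theorem prearchimedean_nonarchimedean_iff {A : Type*} [CommRing A]
    {R : Type*} [Semifield R] [LinearOrder R]
    (hadd : ∀ x y z t : R, x ≤ z → y ≤ t → x + y ≤ z + t)
    (hmul : ∀ x y z t : R, x ≤ z → y ≤ t → x * y ≤ z * t)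
    (hpos : (0 : R) < 1)
    (f : A → R)
    (hf0 : f 0 = 0) (hf1 : f 1 = 1)
    (hfm : ∀ a b : A, f (a * b) ≤ f a * f b)
    (hfa : ∀ a b : A, f (a + b) ≤ f a + f b)
    (hpa : ∀ a b : A, f (a + b) ≤ max (f ((2 : ℤ) : A)) 1 * max (f a) (f b)) :
    ((∀ a b : A, f (a + b) ≤ max (f a) (f b)) ↔ (∀ n : ℕ, f ((n : ℕ) : A) ≤ 1)) ∧
      ((∀ n : ℕ, f ((n : ℕ) : A) ≤ 1) ↔ f ((2 : ℤ) : A) ≤ 1) :=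
  prearchimedean_nonarchimedean_iff_general hpos f hf0 hf1 hpa
end

section
/- Let A be a commutative ring, R a positive totally ordered aura with tempered growth, and |·| : A → R a power-multiplicative seminorm. Then |·| is pre-archimedean: |a + b| ≤ max(|2|, 1)·max(|a|, |b|) for all a, b ∈ A, where 2 denotes the image of 2 ∈ ℤ in A. -/
/-!
Power-multiplicativity turns `|a + b|ⁿ` into `|(a + b)ⁿ|`. Expanding binomially gives `n + 1`
terms, each at most `max(|a|, |b|)ⁿ · |C(n, k)|`, and writing `C(n, k) < 2ⁿ⁺¹` in binary bounds
`|C(n, k)|` by `(n + 1) · Mⁿ⁺¹` with `M = max(|2|, 1) ≤ 2`. Hence the `n`-th power of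
`|a + b| / (M · max(|a|, |b|))` is bounded by the polynomial `2 (n + 1)²`, and tempered growth
forces this ratio to be at most `1`.
-/

open Finset Polynomial

def TemperedGrowth (R : Type*) [Semiring R] [LE R] : Prop :=
  ∀ P : ℕ[X], P ≠ 0 → ∀ x : R, (∀ n : ℕ, x ^ n ≤ ((P.eval n : ℕ) : R)) → x ≤ 1

theorem TemperedGrowth.le_of_pow_le_pow_mul {R : Type*} [Semifield R] [LinearOrder R]
    [IsOrderedRing R] (hR : TemperedGrowth R) {P : ℕ[X]} (hP : P ≠ 0) {x c : R} (hc : 0 ≤ c)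
    (hx : ∀ n : ℕ, x ^ n ≤ c ^ n * ((P.eval n : ℕ) : R)) : x ≤ c := by
  obtain rfl | hc := hc.eq_or_lt
  · simpa using hx 1
  -- not a global instance: it holds only because the order is linear
  have := MulPosMono.toMulPosReflectLT (α := R)
  have hxc : x / c ≤ 1 := hR P hP _ fun n ↦ by
    rw [div_pow]
    exact div_le_of_le_mul₀ (pow_nonneg hc.le n) (Nat.cast_nonneg _)
      ((hx n).trans_eq (mul_comm _ _))
  calc x = x / c * c := (div_mul_cancel₀ x hc.ne').symm
    _ ≤ 1 * c := mul_le_mul_of_nonneg_right hxc hc.le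
    _ = c := one_mul c

theorem nonneg_of_mul_mono {R : Type*} [GroupWithZero R] [LinearOrder R]
    (hmul : ∀ x y z t : R, x ≤ z → y ≤ t → x * y ≤ z * t) (hpos : (0 : R) < 1) (x : R) :
    0 ≤ x := by
  by_contra! hx
  have := hmul x⁻¹ x x⁻¹ 0 le_rfl hx.le
  rw [inv_mul_cancel₀ hx.ne, mul_zero] at this
  exact hpos.not_ge this

theorem IsOrderedRing.of_mono {R : Type*} [Semiring R] [PartialOrder R]
    (hadd : ∀ x y z t : R, x ≤ z → y ≤ t → x + y ≤ z + t)
    (hmul : ∀ x y z t : R, x ≤ z → y ≤ t → x * y ≤ z * t) (h01 : (0 : R) ≤ 1) :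
    IsOrderedRing R where
  add_le_add_left a b hab c := hadd a c b c hab le_rfl
  zero_le_one := h01
  mul_le_mul_of_nonneg_left a _ b c hbc := hmul a b a c le_rfl hbc
  mul_le_mul_of_nonneg_right a _ b c hbc := hmul b a c a hbc le_rfl

structure IsRingSeminorm {A R : Type*} [Semiring A] [Semiring R] [LE R] (f : A → R) : Prop where
  map_zero : f 0 = 0
  map_one : f 1 = 1
  nonneg : ∀ a, 0 ≤ f a
  map_mul_le : ∀ a b, f (a * b) ≤ f a * f b
  map_add_le : ∀ a b, f (a + b) ≤ f a + f b

namespace IsRingSeminorm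

variable {A R : Type*} [CommSemiring R] [LinearOrder R] [IsOrderedRing R] {f : A → R} {M : R}

theorem map_natCast_le [Semiring A] (hf : IsRingSeminorm f) (h2 : f 2 ≤ M) (hM : 1 ≤ M) :
    ∀ n m : ℕ, m < 2 ^ n → f (m : A) ≤ n * M ^ n
  | 0, m, hm => by simp [Nat.lt_one_iff.mp (by simpa using hm), hf.map_zero]
  | n + 1, m, hm => by
    have hdiv : m / 2 < 2 ^ n := by omega
    have hmod : f ((m % 2 : ℕ) : A) ≤ 1 := by
      rcases Nat.mod_two_eq_zero_or_one m with h | h <;> simp [h, hf.map_zero, hf.map_one]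
    have hdigits : (m : A) = 2 * ((m / 2 : ℕ) : A) + ((m % 2 : ℕ) : A) := by
      rw [← Nat.cast_ofNat, ← Nat.cast_mul, ← Nat.cast_add, Nat.div_add_mod]
    calc f (m : A) ≤ f 2 * f ((m / 2 : ℕ) : A) + f ((m % 2 : ℕ) : A) := by
          rw [hdigits]; exact (hf.map_add_le _ _).trans (add_le_add_left (hf.map_mul_le _ _) _)
      _ ≤ M * (n * M ^ n) + M ^ (n + 1) :=
          add_le_add (mul_le_mul h2 (map_natCast_le hf h2 hM n _ hdiv) (hf.nonneg _)
            (zero_le_one.trans hM)) (hmod.trans (one_le_pow₀ hM))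
      _ = (n + 1 : ℕ) * M ^ (n + 1) := by push_cast; ring

theorem map_choose_le [Semiring A] (hf : IsRingSeminorm f) (h2 : f 2 ≤ M) (hM : 1 ≤ M)
    (n k : ℕ) : f (n.choose k : A) ≤ (n + 1) * M ^ (n + 1) := by
  have hlt : n.choose k < 2 ^ (n + 1) :=
    (Nat.choose_le_two_pow n k).trans_lt (Nat.pow_lt_pow_succ one_lt_two)
  simpa using hf.map_natCast_le h2 hM (n + 1) _ hlt

theorem map_add_pow_le [CommSemiring A] (hf : IsRingSeminorm f)
    (hpm : ∀ (a : A) (n : ℕ), f (a ^ n) = f a ^ n) (h2 : f 2 ≤ M) (hM : 1 ≤ M)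
    (a b : A) (n : ℕ) :
    f (a + b) ^ n ≤ (n + 1) * (max (f a) (f b) ^ n * ((n + 1) * M ^ (n + 1))) := by
  set N := max (f a) (f b)
  have hterm (k : ℕ) (hk : k ∈ range (n + 1)) :
      f (a ^ k * b ^ (n - k) * (n.choose k : A)) ≤ N ^ n * ((n + 1) * M ^ (n + 1)) := by
    have hkn : k + (n - k) = n := Nat.add_sub_cancel' (Nat.lt_succ_iff.mp (mem_range.mp hk))
    calc f (a ^ k * b ^ (n - k) * (n.choose k : A))
        ≤ f a ^ k * f b ^ (n - k) * f (n.choose k : A) := by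
          rw [← hpm, ← hpm]
          exact (hf.map_mul_le _ _).trans
            (mul_le_mul_of_nonneg_right (hf.map_mul_le _ _) (hf.nonneg _))
      _ ≤ N ^ k * N ^ (n - k) * ((n + 1) * M ^ (n + 1)) := by
          have := hf.nonneg a
          have := hf.nonneg b
          gcongr
          exacts [hf.nonneg _, le_max_left (f a) (f b), le_max_right (f a) (f b),
            hf.map_choose_le h2 hM n k]
      _ = N ^ n * ((n + 1) * M ^ (n + 1)) := by rw [← pow_add, hkn]
  calc f (a + b) ^ n = f (∑ k ∈ range (n + 1), a ^ k * b ^ (n - k) * (n.choose k : A)) := by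
        rw [← hpm, add_pow]
    _ ≤ ∑ k ∈ range (n + 1), f (a ^ k * b ^ (n - k) * (n.choose k : A)) :=
        le_sum_of_subadditive f hf.map_zero.le hf.map_add_le _ _
    _ ≤ ∑ _k ∈ range (n + 1), N ^ n * ((n + 1) * M ^ (n + 1)) := sum_le_sum hterm
    _ = (n + 1) * (N ^ n * ((n + 1) * M ^ (n + 1))) := by simp

end IsRingSeminorm

theorem IsRingSeminorm.map_add_le_max_mul_max {A R : Type*} [CommSemiring A] [Semifield R]
    [LinearOrder R] [IsOrderedRing R] {f : A → R} (hf : IsRingSeminorm f)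
    (hR : TemperedGrowth R) (hpm : ∀ (a : A) (n : ℕ), f (a ^ n) = f a ^ n) (a b : A) :
    f (a + b) ≤ max (f 2) 1 * max (f a) (f b) := by
  set M := max (f 2) 1
  set N := max (f a) (f b)
  have hM : 1 ≤ M := le_max_right _ _
  have hf2 : f 2 ≤ 2 := by
    simpa [one_add_one_eq_two, hf.map_one] using hf.map_add_le (1 : A) 1
  have hM2 : M ≤ 2 := max_le hf2 one_le_two
  have hMN : 0 ≤ M * N :=
    mul_nonneg (zero_le_one.trans hM) ((hf.nonneg a).trans (le_max_left _ _))
  refine hR.le_of_pow_le_pow_mul (P := 2 * (X + 1) ^ 2)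
    (fun h ↦ by simpa using congrArg (eval 0) h) hMN fun n ↦ ?_
  calc f (a + b) ^ n ≤ (n + 1) * (N ^ n * ((n + 1) * M ^ (n + 1))) :=
        hf.map_add_pow_le hpm (le_max_left _ _) hM a b n
    _ = (M * N) ^ n * ((n + 1) ^ 2 * M) := by ring
    _ ≤ (M * N) ^ n * ((n + 1) ^ 2 * 2) := by gcongr
    _ = (M * N) ^ n * (((2 * (X + 1) ^ 2 : ℕ[X]).eval n : ℕ) : R) := by
        congr 1; simp [mul_comm]

/-- A tempered power-multiplicative seminorm on a ring is pre-archimedean: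
`|a + b| ≤ max(|2|, 1) · max(|a|, |b|)` for all `a, b`. -/
theorem tempered_powmult_prearchimedean {A : Type*} [CommRing A]
    {R : Type*} [Semifield R] [LinearOrder R]
    (hadd : ∀ x y z t : R, x ≤ z → y ≤ t → x + y ≤ z + t)
    (hmul : ∀ x y z t : R, x ≤ z → y ≤ t → x * y ≤ z * t)
    (hpos : (0 : R) < 1)
    (htemp : ∀ P : Polynomial ℕ, P ≠ 0 →
      ∀ x : R, (∀ n : ℕ, x ^ n ≤ ((P.eval n : ℕ) : R)) → x ≤ 1)
    (f : A → R)
    (hf0 : f 0 = 0) (hf1 : f 1 = 1)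
    (hfm : ∀ a b : A, f (a * b) ≤ f a * f b)
    (hfa : ∀ a b : A, f (a + b) ≤ f a + f b)
    (hpm : ∀ (a : A) (n : ℕ), f (a ^ n) = f a ^ n) :
    ∀ a b : A, f (a + b) ≤ max (f ((2 : ℤ) : A)) 1 * max (f a) (f b) := by
  have hnonneg : ∀ x : R, 0 ≤ x := nonneg_of_mul_mono hmul hpos
  have : IsOrderedRing R := .of_mono hadd hmul hpos.le
  have hf : IsRingSeminorm f := ⟨hf0, hf1, fun a ↦ hnonneg (f a), hfm, hfa⟩
  intro a b
  rw [Int.cast_ofNat]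
  exact hf.map_add_le_max_mul_max htemp hpm a b
end

section
/- Let R be a positive totally ordered aura and |·| : ℚ → R a non-archimedean multiplicative seminorm with trivial kernel (|x| = 0 if and only if x = 0). Then either |x| = 1 for all nonzero x ∈ ℚ, or there exists a prime number p such that 0 < |p| < 1 and |x| = |p|^{v_p(x)} for every nonzero x ∈ ℚ, where v_p(x) ∈ ℤ denotes the p-adic valuation of x. -/
/-!
The ultrametric inequality bounds `|n| ≤ 1` on all integers. If `|n| = 1` for every positive
integer `n`, the seminorm is trivial. Otherwise some prime `p` has `|p| < 1`, and for `m` coprime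
to `p` a Bézout relation `u p + v m = 1` gives `1 ≤ max (|u| |p|) (|v| |m|)`, which forces
`|m| = 1`; writing `x = p ^ v_p(x) · (unit at p)` then yields `|x| = |p| ^ v_p(x)`.
-/

theorem nonneg_of_mul_le_mul {G₀ : Type*} [GroupWithZero G₀] [LinearOrder G₀]
    (hmul : ∀ x y z t : G₀, x ≤ z → y ≤ t → x * y ≤ z * t) (hpos : (0 : G₀) < 1) (x : G₀) :
    0 ≤ x := by
  by_contra! hx
  have h := hmul x x⁻¹ 0 x⁻¹ hx.le le_rfl
  rw [mul_inv_cancel₀ hx.ne, zero_mul] at h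
  exact h.not_gt hpos

theorem eq_one_of_mul_self_eq_one {M : Type*} [Monoid M] [LinearOrder M]
    (hmul : ∀ x y z t : M, x ≤ z → y ≤ t → x * y ≤ z * t) {x : M} (hx : x * x = 1) : x = 1 := by
  rcases lt_trichotomy x 1 with hlt | heq | hgt
  · have h := hmul x x x 1 le_rfl hlt.le
    rw [hx, mul_one] at h
    exact absurd h hlt.not_ge
  · exact heq
  · have h := hmul 1 x x x hgt.le le_rfl
    rw [one_mul, hx] at h
    exact absurd h hgt.not_ge

namespace MonoidWithZeroHom

section Ring

variable {M₀ A : Type*} [MonoidWithZero M₀] [LinearOrder M₀] [Ring A] (f : A →*₀ M₀)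

theorem map_neg_of_mul_le_mul (hmul : ∀ x y z t : M₀, x ≤ z → y ≤ t → x * y ≤ z * t) (a : A) :
    f (-a) = f a := by
  have hneg_one : f (-1) = 1 :=
    eq_one_of_mul_self_eq_one hmul (by rw [← map_mul, neg_one_mul, neg_neg, map_one])
  rw [← neg_one_mul, map_mul, hneg_one, one_mul]

theorem map_intCast_eq_map_natAbs (hmul : ∀ x y z t : M₀, x ≤ z → y ≤ t → x * y ≤ z * t)
    (n : ℤ) : f n = f n.natAbs := by
  obtain ⟨m, rfl | rfl⟩ := Int.eq_nat_or_neg n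
  · simp
  · simp [map_neg_of_mul_le_mul f hmul]

theorem map_natCast_le_one (hpos : (0 : M₀) < 1) (hna : ∀ a b : A, f (a + b) ≤ max (f a) (f b))
    (n : ℕ) : f n ≤ 1 := by
  induction n with
  | zero => simpa using hpos.le
  | succ n ih =>
    calc f ((n + 1 : ℕ) : A) ≤ max (f n) (f 1) := by push_cast; exact hna _ _
      _ ≤ 1 := by rw [map_one]; exact max_le ih le_rfl

theorem map_intCast_le_one (hmul : ∀ x y z t : M₀, x ≤ z → y ≤ t → x * y ≤ z * t)
    (hpos : (0 : M₀) < 1) (hna : ∀ a b : A, f (a + b) ≤ max (f a) (f b)) (n : ℤ) :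
    f n ≤ 1 := by
  rw [map_intCast_eq_map_natAbs f hmul]
  exact map_natCast_le_one f hpos hna _

theorem exists_prime_map_natCast_lt_one (hmul : ∀ x y z t : M₀, x ≤ z → y ≤ t → x * y ≤ z * t)
    {n : ℕ} (hn : n ≠ 0) (hfn : f n < 1) : ∃ p : ℕ, p.Prime ∧ f p < 1 := by
  induction n using Nat.recOnMul with
  | zero => exact absurd rfl hn
  | one => simp at hfn
  | prime p hp => exact ⟨p, hp, hfn⟩
  | mul a b iha ihb =>
    obtain ⟨ha, hb⟩ := mul_ne_zero_iff.mp hn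
    by_cases hfa : f a < 1
    · exact iha ha hfa
    by_cases hfb : f b < 1
    · exact ihb hb hfb
    have h := hmul 1 1 (f a) (f b) (not_lt.mp hfa) (not_lt.mp hfb)
    rw [one_mul, ← map_mul, ← Nat.cast_mul] at h
    exact absurd h hfn.not_ge

theorem map_natCast_eq_one_of_coprime (hmul : ∀ x y z t : M₀, x ≤ z → y ≤ t → x * y ≤ z * t)
    (hpos : (0 : M₀) < 1) (hna : ∀ a b : A, f (a + b) ≤ max (f a) (f b)) {p m : ℕ}
    (hfp : f p < 1) (hpm : p.Coprime m) : f m = 1 := by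
  obtain ⟨u, v, huv⟩ := hpm.isCoprime
  have huv' : (u : A) * p + v * m = 1 := by exact_mod_cast congrArg (Int.cast : ℤ → A) huv
  have hint_le := map_intCast_le_one f hmul hpos hna
  have hup : f (u * p) < 1 := by
    have h := hmul (f u) (f p) 1 (f p) (hint_le u) le_rfl
    rw [one_mul, ← map_mul] at h
    exact h.trans_lt hfp
  have hvm : 1 ≤ f (v * m) := by
    have h := hna (u * p) (v * m)
    rw [huv', map_one] at h
    exact (le_max_iff.mp h).resolve_left hup.not_ge
  have hvm_le : f (v * m) ≤ f m := by
    have h := hmul (f v) (f m) 1 (f m) (hint_le v) le_rfl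
    rwa [one_mul, ← map_mul] at h
  exact le_antisymm (map_natCast_le_one f hpos hna m) (hvm.trans hvm_le)

theorem map_natCast_eq_pow_padicValNat (hmul : ∀ x y z t : M₀, x ≤ z → y ≤ t → x * y ≤ z * t)
    (hpos : (0 : M₀) < 1) (hna : ∀ a b : A, f (a + b) ≤ max (f a) (f b)) {p : ℕ} (hp : p.Prime)
    (hfp : f p < 1) {n : ℕ} (hn : n ≠ 0) : f n = f p ^ padicValNat p n := by
  have hcompl : f (n / p ^ n.factorization p : ℕ) = 1 :=
    map_natCast_eq_one_of_coprime f hmul hpos hna hfp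
      (hp.coprime_iff_not_dvd.mpr (Nat.not_dvd_ordCompl hp hn))
  conv_lhs => rw [← Nat.ordProj_mul_ordCompl_eq_self n p]
  rw [Nat.cast_mul, map_mul, hcompl, mul_one, Nat.cast_pow, map_pow, Nat.factorization_def n hp]

theorem map_intCast_eq_pow_padicValInt (hmul : ∀ x y z t : M₀, x ≤ z → y ≤ t → x * y ≤ z * t)
    (hpos : (0 : M₀) < 1) (hna : ∀ a b : A, f (a + b) ≤ max (f a) (f b)) {p : ℕ} (hp : p.Prime)
    (hfp : f p < 1) {n : ℤ} (hn : n ≠ 0) : f n = f p ^ padicValInt p n := by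
  rw [map_intCast_eq_map_natAbs f hmul]
  exact map_natCast_eq_pow_padicValNat f hmul hpos hna hp hfp (Int.natAbs_ne_zero.mpr hn)

end Ring

theorem map_num_eq_mul_map_den {M₀ : Type*} [MonoidWithZero M₀] (f : ℚ →*₀ M₀) (x : ℚ) :
    f x.num = f x * f x.den := by
  rw [← map_mul, Rat.mul_den_eq_num]

theorem map_eq_one_of_map_natCast_eq_one {M₀ : Type*} [MonoidWithZero M₀] [LinearOrder M₀]
    (f : ℚ →*₀ M₀) (hmul : ∀ x y z t : M₀, x ≤ z → y ≤ t → x * y ≤ z * t)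
    (hnat : ∀ n : ℕ, n ≠ 0 → f n = 1) {x : ℚ} (hx : x ≠ 0) : f x = 1 := by
  have h := map_num_eq_mul_map_den f x
  rwa [map_intCast_eq_map_natAbs f hmul, hnat _ (Int.natAbs_ne_zero.mpr (Rat.num_ne_zero.mpr hx)),
    hnat _ x.den_nz, mul_one, eq_comm] at h

theorem map_eq_zpow_padicValRat {G₀ : Type*} [GroupWithZero G₀] [LinearOrder G₀] (f : ℚ →*₀ G₀)
    (hmul : ∀ x y z t : G₀, x ≤ z → y ≤ t → x * y ≤ z * t) (hpos : (0 : G₀) < 1)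
    (hna : ∀ a b : ℚ, f (a + b) ≤ max (f a) (f b)) {p : ℕ} (hp : p.Prime) (hfp : f p < 1)
    (hfp0 : f p ≠ 0) {x : ℚ} (hx : x ≠ 0) : f x = f p ^ padicValRat p x := by
  have h := map_num_eq_mul_map_den f x
  rw [map_intCast_eq_pow_padicValInt f hmul hpos hna hp hfp (Rat.num_ne_zero.mpr hx),
    map_natCast_eq_pow_padicValNat f hmul hpos hna hp hfp x.den_nz] at h
  rw [padicValRat, zpow_sub₀ hfp0, zpow_natCast, zpow_natCast, h,
    mul_div_cancel_right₀ _ (pow_ne_zero _ hfp0)]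

end MonoidWithZeroHom

theorem rational_nonarchimedean_places_general
    {R : Type*} [Semifield R] [LinearOrder R]
    (hmul : ∀ x y z t : R, x ≤ z → y ≤ t → x * y ≤ z * t)
    (hpos : (0 : R) < 1)
    (f : ℚ → R)
    (hf0 : f 0 = 0) (hf1 : f 1 = 1)
    (hfm : ∀ a b : ℚ, f (a * b) = f a * f b)
    (hna : ∀ a b : ℚ, f (a + b) ≤ max (f a) (f b))
    (hker : ∀ x : ℚ, f x = 0 ↔ x = 0) :
    (∀ x : ℚ, x ≠ 0 → f x = 1) ∨
      ∃ p : ℕ, p.Prime ∧ 0 < f (p : ℚ) ∧ f (p : ℚ) < 1 ∧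
        ∀ x : ℚ, x ≠ 0 → f x = f (p : ℚ) ^ (padicValRat p x) := by
  let φ : ℚ →*₀ R := { toFun := f, map_zero' := hf0, map_one' := hf1, map_mul' := hfm }
  by_cases htriv : ∀ n : ℕ, n ≠ 0 → f n = 1
  · exact Or.inl fun x => φ.map_eq_one_of_map_natCast_eq_one hmul htriv
  obtain ⟨n, hn, hfn⟩ := not_forall₂.mp htriv
  obtain ⟨p, hp, hfp⟩ := φ.exists_prime_map_natCast_lt_one hmul hn
    ((φ.map_natCast_le_one hpos hna n).lt_of_ne hfn)
  have hfp0 : f p ≠ 0 := fun h => hp.ne_zero (by exact_mod_cast (hker _).mp h)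
  exact Or.inr ⟨p, hp, (nonneg_of_mul_le_mul hmul hpos _).lt_of_ne' hfp0, hfp,
    fun x => φ.map_eq_zpow_padicValRat hmul hpos hna hp hfp hfp0⟩

/-- A non-archimedean multiplicative seminorm on `ℚ` with trivial kernel is either
trivial or `p`-adic for some prime `p`: in the latter case `0 < |p| < 1` and
`|x| = |p| ^ v_p(x)` for all nonzero `x`. -/
theorem rational_nonarchimedean_places
    {R : Type*} [Semifield R] [LinearOrder R]
    (hadd : ∀ x y z t : R, x ≤ z → y ≤ t → x + y ≤ z + t)
    (hmul : ∀ x y z t : R, x ≤ z → y ≤ t → x * y ≤ z * t)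
    (hpos : (0 : R) < 1)
    (f : ℚ → R)
    (hf0 : f 0 = 0) (hf1 : f 1 = 1)
    (hfm : ∀ a b : ℚ, f (a * b) = f a * f b)
    (hfa : ∀ a b : ℚ, f (a + b) ≤ f a + f b)
    (hna : ∀ a b : ℚ, f (a + b) ≤ max (f a) (f b))
    (hker : ∀ x : ℚ, f x = 0 ↔ x = 0) :
    (∀ x : ℚ, x ≠ 0 → f x = 1) ∨
      ∃ p : ℕ, p.Prime ∧ 0 < f (p : ℚ) ∧ f (p : ℚ) < 1 ∧
        ∀ x : ℚ, x ≠ 0 → f x = f (p : ℚ) ^ (padicValRat p x) :=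
  rational_nonarchimedean_places_general hmul hpos f hf0 hf1 hfm hna hker
end

section
/- Let R be a positive totally ordered aura with tempered growth and |·| : ℤ → R a multiplicative seminorm. Then exactly one of the following holds: (i) |n| = 1 for every nonzero n ∈ ℤ (the trivial place); (ii) there exists a prime p such that |n| = 0 whenever p divides n and |n| = 1 otherwise (the p-residual place); (iii) there exists a prime p such that 0 < |p| < 1 and |n| = |p|^{v_p(n)} for every nonzero n ∈ ℤ, where v_p(n) is the p-adic valuation (the p-adic place); (iv) |2| > 1 and |·| is multiplicatively equivalent to the usual archimedean absolute value: |m·n| = |m|·|n| for all m, n ∈ ℤ and |m| ≤ |n| if and only if the usual absolute value of m is at most that of n (the archimedean place). -/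
/-!
Tempered growth turns bounds of the form `x ^ k ≤ c (k + 1) y ^ k` into `x ≤ y`. Such bounds come
from subadditivity: expanding `m < b ^ k` in base `b` gives `|m| ≤ k b M ^ k` whenever `|b| ≤ M`.

If `|N| > 1` for some `N`, this forces `|b| > 1` for every `b ≥ 2` and then `|m| ≤ |n|` for
`m ≤ n`; the inequality `2 n ^ n ≤ (n + 1) ^ n` makes it strict, which is the archimedean place.
Otherwise `|·| ≤ 1` on `ℤ`, and a Bezout identity `u a ^ k + v b ^ k = 1` gives `1 ≤ 2 c ^ k` with
`c = max |a| |b|`, so coprime `a`, `b` cannot both satisfy `|·| < 1`. Hence `|·| = 1` off the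
multiples of a single prime `p` and `|n| = |p| ^ v_p(n)`: the place is trivial, `p`-residual
(`|p| = 0`) or `p`-adic. The alternatives are told apart by the values at `p` and at `2`.
-/

section

variable {R : Type*} [Semifield R] [LinearOrder R]

/-- The trivial place: `|n| = 1` for every nonzero integer `n`. -/
def IsTrivialPlace (f : ℤ → R) : Prop :=
  ∀ n : ℤ, n ≠ 0 → f n = 1

/-- The `p`-residual place: `|n| = 0` if `p ∣ n` and `|n| = 1` otherwise. -/
def IsResidualPlace (f : ℤ → R) : Prop :=
  ∃ p : ℕ, p.Prime ∧ ∀ n : ℤ, ((p : ℤ) ∣ n → f n = 0) ∧ (¬ (p : ℤ) ∣ n → f n = 1)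

/-- The `p`-adic place: `0 < |p| < 1` and `|n| = |p| ^ v_p(n)` for nonzero `n`. -/
def IsPadicPlace (f : ℤ → R) : Prop :=
  ∃ p : ℕ, p.Prime ∧ 0 < f (p : ℤ) ∧ f (p : ℤ) < 1 ∧
    ∀ n : ℤ, n ≠ 0 → f n = f (p : ℤ) ^ (padicValInt p n)

/-- The archimedean place: `|2| > 1`, `|·|` is multiplicative on `ℤ` and it is
multiplicatively equivalent to the usual archimedean absolute value. -/
def IsArchimedeanPlace (f : ℤ → R) : Prop :=
  1 < f 2 ∧ (∀ m n : ℤ, f (m * n) = f m * f n) ∧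
    ∀ m n : ℤ, f m ≤ f n ↔ |m| ≤ |n|

variable (R) in
def HasTemperedGrowth : Prop :=
  ∀ P : Polynomial ℕ, P ≠ 0 → ∀ x : R, (∀ n : ℕ, x ^ n ≤ ((P.eval n : ℕ) : R)) → x ≤ 1

structure IsMulSeminorm (f : ℤ →*₀ R) : Prop where
  nonneg (n : ℤ) : 0 ≤ f n
  map_add_le (a b : ℤ) : f (a + b) ≤ f a + f b

theorem isOrderedRing_of_mono {S : Type*} [Semiring S] [PartialOrder S]
    (hadd : ∀ x y z t : S, x ≤ z → y ≤ t → x + y ≤ z + t)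
    (hmul : ∀ x y z t : S, x ≤ z → y ≤ t → x * y ≤ z * t) (hpos : (0 : S) < 1) :
    IsOrderedRing S where
  add_le_add_left a b h c := hadd a c b c h le_rfl
  zero_le_one := hpos.le
  mul_le_mul_of_nonneg_left a _ b c h := hmul a b a c le_rfl h
  mul_le_mul_of_nonneg_right c _ a b h := hmul a c b c h le_rfl

section OrderedSemifield

variable [IsOrderedRing R]

-- `R` need not be additively cancellative (tropical semifields are auras), so it is no
-- `LinearOrderedSemifield`; strict monotonicity of multiplication still follows from inverses.
attribute [local instance] PosMulMono.toPosMulReflectLT PosMulReflectLT.toPosMulStrictMono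
  PosMulStrictMono.toMulPosStrictMono

theorem nonneg_of_mono_mul (hmul : ∀ x y z t : R, x ≤ z → y ≤ t → x * y ≤ z * t) (x : R) :
    0 ≤ x := by
  by_contra! hx
  have : (1 : R) ≤ 0 := by
    rcases le_or_gt 0 x⁻¹ with hinv | hinv
    · simpa [hx.ne] using hmul x x⁻¹ 0 x⁻¹ hx.le le_rfl
    · simpa [hx.ne] using hmul x x⁻¹ 0 0 hx.le hinv.le
  exact this.not_gt zero_lt_one

theorem HasTemperedGrowth.le_of_pow_le (ht : HasTemperedGrowth R) {c : ℕ} {x y : R} (hy : 0 ≤ y)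
    (h : ∀ k : ℕ, x ^ k ≤ c * (k + 1) * y ^ k) : x ≤ y := by
  rcases hy.eq_or_lt with rfl | hy
  · simpa using h 1
  have hc : c ≠ 0 := by
    rintro rfl
    exact zero_lt_one.not_ge (by simpa using h 0)
  rw [← div_le_one₀ hy]
  refine ht (.C c * (.X + .C 1)) (mul_ne_zero (by simpa) (Polynomial.X_add_C_ne_zero 1)) _
    fun k => ?_
  rw [div_pow, div_le_iff₀ (pow_pos hy k)]
  simpa using h k

theorem exists_prime_map_lt_one {f : ℤ →*₀ R} {q : ℕ} (hq : q ≠ 0) (hfq : f q < 1) :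
    ∃ p : ℕ, p.Prime ∧ f p < 1 := by
  induction q using Nat.recOnMul with
  | zero => exact absurd rfl hq
  | one => simp at hfq
  | prime p hp => exact ⟨p, hp, hfq⟩
  | mul a b iha ihb =>
    rw [Nat.cast_mul, map_mul] at hfq
    rcases lt_or_ge (f a) 1 with ha | ha
    · exact iha (left_ne_zero_of_mul hq) ha
    rcases lt_or_ge (f b) 1 with hb | hb
    · exact ihb (right_ne_zero_of_mul hq) hb
    exact absurd (one_le_mul_of_one_le_of_one_le ha hb) hfq.not_ge

namespace IsMulSeminorm

variable {f : ℤ →*₀ R}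

theorem map_neg_one (hf : IsMulSeminorm f) : f (-1) = 1 :=
  (pow_eq_one_iff_of_nonneg (hf.nonneg _) two_ne_zero).mp (by simp [← map_pow])

theorem map_neg (hf : IsMulSeminorm f) (n : ℤ) : f (-n) = f n := by
  rw [neg_eq_neg_one_mul, map_mul, hf.map_neg_one, one_mul]

theorem map_natAbs (hf : IsMulSeminorm f) (n : ℤ) : f n.natAbs = f n := by
  rcases abs_choice n with h | h <;> simp [h, hf.map_neg]

theorem map_natCast_le (hf : IsMulSeminorm f) (n : ℕ) : f n ≤ n := by
  induction n with
  | zero => simp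
  | succ n ih =>
    push_cast
    exact (hf.map_add_le _ _).trans (by simpa using add_le_add_left ih 1)

/-- Expand `m` in base `b`: each of the `k` digits contributes at most `b * M ^ k`. -/
theorem map_natCast_le_of_lt_pow (hf : IsMulSeminorm f) {b : ℕ} (hb : 0 < b) {M : R}
    (hM : 1 ≤ M) (hfb : f b ≤ M) {k m : ℕ} (hm : m < b ^ k) : f m ≤ k * b * M ^ k := by
  induction k generalizing m with
  | zero => simp_all
  | succ k ih =>
    have hq : m / b < b ^ k := Nat.div_lt_of_lt_mul (by rwa [← pow_succ'])
    have hdigits : (m : ℤ) = b * (m / b : ℕ) + (m % b : ℕ) := by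
      exact_mod_cast (Nat.div_add_mod m b).symm
    calc f m ≤ f b * f (m / b : ℕ) + f (m % b : ℕ) := by
          rw [hdigits, ← map_mul]; exact hf.map_add_le _ _
      _ ≤ M * (k * b * M ^ k) + b :=
          add_le_add (mul_le_mul hfb (ih hq) (hf.nonneg _) (zero_le_one.trans hM))
            ((hf.map_natCast_le _).trans (Nat.mono_cast (Nat.mod_lt m hb).le))
      _ ≤ M * (k * b * M ^ k) + b * M ^ (k + 1) := by
          gcongr; exact le_mul_of_one_le_right (Nat.cast_nonneg b) (one_le_pow₀ hM)
      _ = (k + 1 : ℕ) * b * M ^ (k + 1) := by push_cast; ring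

theorem one_lt_map_of_one_lt (hf : IsMulSeminorm f) (ht : HasTemperedGrowth R) {N : ℕ}
    (hN : 1 < f N) {b : ℕ} (hb : 2 ≤ b) : 1 < f b := by
  by_contra! hfb
  refine hN.not_ge (ht.le_of_pow_le (c := (N + 1) * b) zero_le_one fun j => ?_)
  have hpow : N ^ j < b ^ (N * j + 1) :=
    calc N ^ j ≤ (b ^ N) ^ j :=
          Nat.pow_le_pow_left (Nat.lt_two_pow_self.le.trans (Nat.pow_le_pow_left hb N)) j
      _ = b ^ (N * j) := (pow_mul b N j).symm
      _ < b ^ (N * j + 1) := Nat.pow_lt_pow_succ hb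
  calc f N ^ j = f (N ^ j : ℕ) := by rw [Nat.cast_pow, map_pow]
    _ ≤ (N * j + 1 : ℕ) * b * 1 ^ (N * j + 1) :=
        hf.map_natCast_le_of_lt_pow (by omega) le_rfl hfb hpow
    _ = ((N * j + 1) * b : ℕ) := by simp
    _ ≤ ((N + 1) * b * (j + 1) : ℕ) := Nat.mono_cast (by nlinarith)
    _ = ((N + 1) * b : ℕ) * (j + 1) * 1 ^ j := by push_cast; ring

theorem map_le_one_or_one_lt (hf : IsMulSeminorm f) (ht : HasTemperedGrowth R) :
    (∀ n : ℤ, f n ≤ 1) ∨ ∀ b : ℕ, 2 ≤ b → 1 < f b := by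
  by_cases h : ∃ N : ℕ, 1 < f N
  · obtain ⟨N, hN⟩ := h
    exact .inr fun b hb => hf.one_lt_map_of_one_lt ht hN hb
  · simp only [not_exists, not_lt] at h
    exact .inl fun n => hf.map_natAbs n ▸ h _

theorem map_natCast_le_of_le (hf : IsMulSeminorm f) (ht : HasTemperedGrowth R) {m n : ℕ}
    (hn : 2 ≤ n) (hfn : 1 ≤ f n) (hmn : m ≤ n) : f m ≤ f n := by
  refine ht.le_of_pow_le (c := n * n) (zero_le_one.trans hfn) fun k => ?_
  have hpow : m ^ k < n ^ (k + 1) := (Nat.pow_le_pow_left hmn k).trans_lt (Nat.pow_lt_pow_succ hn)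
  calc f m ^ k = f (m ^ k : ℕ) := by rw [Nat.cast_pow, map_pow]
    _ ≤ (k + 1 : ℕ) * n * f n ^ (k + 1) :=
        hf.map_natCast_le_of_lt_pow (by omega) hfn le_rfl hpow
    _ = (k + 1 : ℕ) * n * f n * f n ^ k := by ring
    _ ≤ (k + 1 : ℕ) * n * n * f n ^ k := by gcongr; exact hf.map_natCast_le n
    _ = (n * n : ℕ) * (k + 1) * f n ^ k := by push_cast; ring

theorem monotone_map_natCast (hf : IsMulSeminorm f) (ht : HasTemperedGrowth R)
    (h : ∀ b : ℕ, 2 ≤ b → 1 < f b) : Monotone fun n : ℕ ↦ f n := by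
  refine monotone_nat_of_le_succ fun n => ?_
  rcases n.eq_zero_or_pos with rfl | hn
  · simp
  · exact hf.map_natCast_le_of_le ht (by omega) (h _ (by omega)).le n.le_succ

theorem strictMono_map_natCast (hf : IsMulSeminorm f) (ht : HasTemperedGrowth R)
    (h : ∀ b : ℕ, 2 ≤ b → 1 < f b) : StrictMono fun n : ℕ ↦ f n := by
  have hmono := hf.monotone_map_natCast ht h
  refine strictMono_nat_of_lt_succ fun n =>
    (hmono n.le_succ).lt_of_ne fun (heq : f n = f (n + 1 : ℕ)) => ?_
  rcases n.eq_zero_or_pos with rfl | hn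
  · simp at heq
  have hbernoulli : 2 * n ^ n ≤ (n + 1) ^ n := by
    have := pow_add_mul_le_add_pow (a := n) (b := 1) n.zero_le (by omega) n
    rwa [Nat.cast_id, mul_one, ← pow_succ', Nat.sub_add_cancel hn, ← two_mul] at this
  have hfn : 0 < f n ^ n := pow_pos (zero_lt_one.trans_le (by simpa using hmono hn)) n
  have hle : f 2 * f n ^ n ≤ f (n + 1 : ℕ) ^ n := by simpa using hmono hbernoulli
  rw [← heq] at hle
  exact (h 2 le_rfl).not_ge ((mul_le_iff_le_one_left hfn).mp (by simpa using hle))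

theorem isArchimedeanPlace (hf : IsMulSeminorm f) (ht : HasTemperedGrowth R)
    (h : ∀ b : ℕ, 2 ≤ b → 1 < f b) : IsArchimedeanPlace f := by
  refine ⟨by simpa using h 2 le_rfl, map_mul f, fun m n => ?_⟩
  rw [← hf.map_natAbs m, ← hf.map_natAbs n, (hf.strictMono_map_natCast ht h).le_iff_le,
    Int.abs_eq_natAbs, Int.abs_eq_natAbs, Nat.cast_le]

theorem map_eq_one_of_isCoprime (hf : IsMulSeminorm f) (ht : HasTemperedGrowth R)
    (hle : ∀ n : ℤ, f n ≤ 1) {a b : ℤ} (hab : IsCoprime a b) (ha : f a < 1) : f b = 1 := by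
  refine (hle b).antisymm (not_lt.mp fun hb => ?_)
  set c := max (f a) (f b)
  have hbezout : ∀ k : ℕ, (1 : R) ^ k ≤ (2 : ℕ) * (k + 1) * c ^ k := by
    intro k
    have hterm : ∀ w n : ℤ, f n ≤ c → f w * f n ^ k ≤ c ^ k := fun w n hn =>
      (mul_le_of_le_one_left (pow_nonneg (hf.nonneg n) k) (hle w)).trans
        (pow_le_pow_left₀ (hf.nonneg n) hn k)
    obtain ⟨u, v, huv⟩ := hab.pow (m := k) (n := k)
    calc (1 : R) ^ k = f (u * a ^ k + v * b ^ k) := by rw [huv, one_pow, map_one]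
      _ ≤ f u * f a ^ k + f v * f b ^ k := (hf.map_add_le _ _).trans_eq (by simp)
      _ ≤ c ^ k + c ^ k := add_le_add (hterm u a (le_max_left _ _)) (hterm v b (le_max_right _ _))
      _ = (2 : ℕ) * 1 * c ^ k := by push_cast; ring
      _ ≤ (2 : ℕ) * (k + 1) * c ^ k := by
          gcongr
          · exact pow_nonneg (le_max_of_le_left (hf.nonneg a)) k
          · exact le_add_of_nonneg_left (Nat.cast_nonneg k)
  exact (max_lt ha hb).not_ge (ht.le_of_pow_le (le_max_of_le_left (hf.nonneg a)) hbezout)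

theorem map_eq_pow_padicValInt (hf : IsMulSeminorm f) (ht : HasTemperedGrowth R)
    (hle : ∀ n : ℤ, f n ≤ 1) {p : ℕ} (hp : p.Prime) (hfp : f p < 1) {n : ℤ}
    (hn : n ≠ 0) : f n = f p ^ padicValInt p n := by
  have := Fact.mk hp
  obtain ⟨e, m, hpm, hnm⟩ :=
    Nat.exists_eq_pow_mul_and_not_dvd (Int.natAbs_ne_zero.mpr hn) p hp.one_lt.ne'
  have hm : f m = 1 := hf.map_eq_one_of_isCoprime ht hle
    (Nat.isCoprime_iff_coprime.mpr ((Nat.Prime.coprime_iff_not_dvd hp).mpr hpm)) hfp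
  have hval : padicValInt p n = e := by
    rw [padicValInt, hnm, padicValNat.mul (pow_ne_zero e hp.ne_zero) (by rintro rfl; simp at hpm),
      padicValNat.prime_pow, padicValNat.eq_zero_of_not_dvd hpm, add_zero]
  rw [← hf.map_natAbs, hnm, hval, Nat.cast_mul, Nat.cast_pow, map_mul, map_pow, hm, mul_one]

theorem isResidualPlace_or_isPadicPlace (hf : IsMulSeminorm f) (ht : HasTemperedGrowth R)
    (hle : ∀ n : ℤ, f n ≤ 1) {p : ℕ} (hp : p.Prime) (hfp : f p < 1) :
    IsResidualPlace f ∨ IsPadicPlace f := by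
  rcases (hf.nonneg p).eq_or_lt with hzero | hpos
  · refine .inl ⟨p, hp, fun n => ⟨?_, fun hpn => ?_⟩⟩
    · rintro ⟨t, rfl⟩
      rw [map_mul, ← hzero, zero_mul]
    · exact hf.map_eq_one_of_isCoprime ht hle
        ((Prime.coprime_iff_not_dvd (Nat.prime_iff_prime_int.mp hp)).mpr hpn) hfp
  · exact .inr ⟨p, hp, hpos, hfp, fun n hn => hf.map_eq_pow_padicValInt ht hle hp hfp hn⟩

theorem isTrivialPlace_or_isResidualPlace_or_isPadicPlace_or_isArchimedeanPlace
    (hf : IsMulSeminorm f) (ht : HasTemperedGrowth R) :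
    IsTrivialPlace f ∨ IsResidualPlace f ∨ IsPadicPlace f ∨ IsArchimedeanPlace f := by
  rcases hf.map_le_one_or_one_lt ht with hle | hgt
  · by_cases htriv : IsTrivialPlace f
    · exact .inl htriv
    obtain ⟨n, hn, hfn⟩ : ∃ n : ℤ, n ≠ 0 ∧ f n < 1 := by
      simpa [IsTrivialPlace, (hle _).lt_iff_ne] using htriv
    obtain ⟨p, hp, hfp⟩ := exists_prime_map_lt_one (q := n.natAbs) (by simpa)
      (by rwa [hf.map_natAbs])
    exact .inr ((hf.isResidualPlace_or_isPadicPlace ht hle hp hfp).imp_right .inl)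
  · exact .inr (.inr (.inr (hf.isArchimedeanPlace ht hgt)))

end IsMulSeminorm

variable {f : ℤ → R}

theorem IsResidualPlace.not_isPadicPlace (hR : IsResidualPlace f) : ¬ IsPadicPlace f := by
  obtain ⟨p, hp, hR⟩ := hR
  rintro ⟨q, -, hq, -, hval⟩
  have := hval p (by exact_mod_cast hp.ne_zero)
  rw [(hR p).1 dvd_rfl] at this
  exact (pow_pos hq _).ne this

theorem IsResidualPlace.not_isArchimedeanPlace (hR : IsResidualPlace f) :
    ¬ IsArchimedeanPlace f := by
  obtain ⟨p, -, hR⟩ := hR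
  rintro ⟨h2, -⟩
  by_cases hp2 : (p : ℤ) ∣ 2
  · exact zero_lt_one.not_gt (((hR 2).1 hp2) ▸ h2)
  · exact h2.ne' ((hR 2).2 hp2)

theorem IsPadicPlace.not_isArchimedeanPlace (hP : IsPadicPlace f) : ¬ IsArchimedeanPlace f := by
  obtain ⟨p, -, hp, hlt, hval⟩ := hP
  rintro ⟨h2, -⟩
  exact h2.not_ge ((hval 2 two_ne_zero).trans_le (pow_le_one₀ hp.le hlt.le))

end OrderedSemifield

theorem IsTrivialPlace.not_isResidualPlace {K : Type*} [Semifield K] {f : ℤ → K}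
    (hT : IsTrivialPlace f) : ¬ IsResidualPlace f := by
  rintro ⟨p, hp, hR⟩
  exact one_ne_zero ((hT p (by exact_mod_cast hp.ne_zero)).symm.trans ((hR p).1 dvd_rfl))

theorem IsTrivialPlace.not_isPadicPlace {f : ℤ → R} (hT : IsTrivialPlace f) :
    ¬ IsPadicPlace f := by
  rintro ⟨p, hp, -, hlt, -⟩
  exact hlt.ne (hT p (by exact_mod_cast hp.ne_zero))

theorem IsTrivialPlace.not_isArchimedeanPlace {f : ℤ → R} (hT : IsTrivialPlace f) :
    ¬ IsArchimedeanPlace f := by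
  rintro ⟨h2, -⟩
  exact h2.ne' (hT 2 two_ne_zero)

/-- Classification of tempered multiplicative seminorms on `ℤ`: exactly one of the
trivial, `p`-residual, `p`-adic or archimedean alternatives holds. -/
theorem int_mult_seminorm_classification
    (hadd : ∀ x y z t : R, x ≤ z → y ≤ t → x + y ≤ z + t)
    (hmul : ∀ x y z t : R, x ≤ z → y ≤ t → x * y ≤ z * t)
    (hpos : (0 : R) < 1)
    (htemp : ∀ P : Polynomial ℕ, P ≠ 0 →
      ∀ x : R, (∀ n : ℕ, x ^ n ≤ ((P.eval n : ℕ) : R)) → x ≤ 1)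
    (f : ℤ → R)
    (hf0 : f 0 = 0) (hf1 : f 1 = 1)
    (hfm : ∀ a b : ℤ, f (a * b) = f a * f b)
    (hfa : ∀ a b : ℤ, f (a + b) ≤ f a + f b) :
    (IsTrivialPlace f ∨ IsResidualPlace f ∨ IsPadicPlace f ∨ IsArchimedeanPlace f) ∧
      ¬ (IsTrivialPlace f ∧ IsResidualPlace f) ∧
      ¬ (IsTrivialPlace f ∧ IsPadicPlace f) ∧
      ¬ (IsTrivialPlace f ∧ IsArchimedeanPlace f) ∧
      ¬ (IsResidualPlace f ∧ IsPadicPlace f) ∧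
      ¬ (IsResidualPlace f ∧ IsArchimedeanPlace f) ∧
      ¬ (IsPadicPlace f ∧ IsArchimedeanPlace f) := by
  have : IsOrderedRing R := isOrderedRing_of_mono hadd hmul hpos
  let F : ℤ →*₀ R := { toFun := f, map_zero' := hf0, map_one' := hf1, map_mul' := hfm }
  have hF : IsMulSeminorm F := ⟨fun n => nonneg_of_mono_mul hmul (f n), hfa⟩
  exact ⟨hF.isTrivialPlace_or_isResidualPlace_or_isPadicPlace_or_isArchimedeanPlace htemp,
    fun h => h.1.not_isResidualPlace h.2, fun h => h.1.not_isPadicPlace h.2,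
    fun h => h.1.not_isArchimedeanPlace h.2, fun h => h.1.not_isPadicPlace h.2,
    fun h => h.1.not_isArchimedeanPlace h.2, fun h => h.1.not_isArchimedeanPlace h.2⟩

end
end
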